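/- Let (Ω, Σ, μ) be a measure space, ρ ≥ 0 a μ-measurable weight, and (f_i)_{i∈I} an orthonormal family in the real Hilbert space L²_ρ(Ω). Let F be a finite subset of I, m_i, M_i, n_i, N_i ∈ ℝ for i ∈ F, and f, g ∈ L²_ρ(Ω) such that Σ_{i∈F} m_i f_i(s) ≤ f(s) ≤ Σ_{i∈F} M_i f_i(s) and Σ_{i∈F} n_i f_i(s) ≤ g(s) ≤ Σ_{i∈F} N_i f_i(s) for μ-almost every s ∈ Ω. Then |∫_Ω ρ f g dμ − Σ_{i∈F} (∫_Ω ρ f f_i dμ)(∫_Ω ρ g f_i dμ)| ≤ (1/4)(Σ_{i∈F} (M_i − m_i)²)^{1/2}(Σ_{i∈F} (N_i − n_i)²)^{1/2} − Σ_{i∈F} |(M_i + m_i)/2 − ∫_Ω ρ f f_i dμ| · |(N_i + n_i)/2 − ∫_Ω ρ g f_i dμ| ≤ (1/4)(Σ_{i∈F} (M_i − m_i)²)^{1/2}(Σ_{i∈F} (N_i − n_i)²)^{1/2}. -/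

import Mathlib

/-!
Since `∫ ρ f g dμ` is the `L²` inner product for the measure `ρ μ`, this is a Grüss-type inequality
for an orthonormal family `(eᵢ)` in a real inner product space. Write `aᵢ = ⟪x, eᵢ⟫` and
`rₓ = x - ∑ aᵢ eᵢ`. The pointwise bounds give `0 ≤ ⟪∑ Mᵢ eᵢ - x, x - ∑ mᵢ eᵢ⟫`, and expanding this
against the orthonormal family yields
`‖rₓ‖² ≤ ¼ ∑ (Mᵢ - mᵢ)² - ∑ ((Mᵢ + mᵢ)/2 - aᵢ)²`.
As `⟪x, y⟫ - ∑ aᵢ bᵢ = ⟪rₓ, r_y⟫`, Cauchy–Schwarz reduces the claim to the reverse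
Cauchy–Schwarz (Aczél) inequality `X Y + b d ≤ a c` whenever `X² + b² ≤ a²`, `Y² + d² ≤ c²`,
followed by Cauchy–Schwarz in `ℝ^F` for the sum of products of the deviations.
-/

open Finset MeasureTheory RealInnerProductSpace

variable {Ω I : Type*} [MeasurableSpace Ω] [DecidableEq I]

section Orthonormal

variable {E ι : Type*} [NormedAddCommGroup E] [InnerProductSpace ℝ E] {e : ι → E}

theorem Orthonormal.inner_sub_sum_smul_sub_sum_smul (he : Orthonormal ℝ e) (s : Finset ι)
    (x y : E) (c d : ι → ℝ) :
    ⟪x - ∑ i ∈ s, c i • e i, y - ∑ i ∈ s, d i • e i⟫ =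
      ⟪x, y⟫ - ∑ i ∈ s, c i * ⟪y, e i⟫ - ∑ i ∈ s, d i * ⟪x, e i⟫ + ∑ i ∈ s, c i * d i := by
  rw [inner_sub_left, inner_sub_right, inner_sub_right, he.inner_sum]
  simp only [inner_sum, real_inner_smul_right, conj_trivial, real_inner_comm y]
  ring

theorem Orthonormal.inner_sub_sum_inner_smul (he : Orthonormal ℝ e) (s : Finset ι) (x y : E) :
    ⟪x - ∑ i ∈ s, ⟪x, e i⟫ • e i, y - ∑ i ∈ s, ⟪y, e i⟫ • e i⟫ =
      ⟪x, y⟫ - ∑ i ∈ s, ⟪x, e i⟫ * ⟪y, e i⟫ := by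
  rw [he.inner_sub_sum_smul_sub_sum_smul]
  simp only [mul_comm ⟪y, _⟫]
  ring

theorem Orthonormal.norm_sub_sum_inner_smul_sq_le (he : Orthonormal ℝ e) (s : Finset ι) (x : E)
    (m M : ι → ℝ) (hx : 0 ≤ ⟪∑ i ∈ s, M i • e i - x, x - ∑ i ∈ s, m i • e i⟫) :
    ‖x - ∑ i ∈ s, ⟪x, e i⟫ • e i‖ ^ 2 ≤
      (∑ i ∈ s, (M i - m i) ^ 2) / 4 - ∑ i ∈ s, ((M i + m i) / 2 - ⟪x, e i⟫) ^ 2 := by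
  rw [← real_inner_self_eq_norm_sq, he.inner_sub_sum_inner_smul]
  rw [← neg_sub, inner_neg_left, he.inner_sub_sum_smul_sub_sum_smul] at hx
  have hsum : (∑ i ∈ s, (M i - m i) ^ 2) / 4 - ∑ i ∈ s, ((M i + m i) / 2 - ⟪x, e i⟫) ^ 2 =
      ∑ i ∈ s, (M i * ⟪x, e i⟫ + m i * ⟪x, e i⟫ - M i * m i - ⟪x, e i⟫ * ⟪x, e i⟫) := by
    rw [sum_div, ← sum_sub_distrib]
    exact sum_congr rfl fun i _ => by ring
  simp only [hsum, sum_sub_distrib, sum_add_distrib]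
  linarith

theorem mul_add_mul_le_mul_of_sq_add_sq_le {X Y a b c d : ℝ} (ha : 0 ≤ a) (hc : 0 ≤ c)
    (hXb : X ^ 2 + b ^ 2 ≤ a ^ 2) (hYd : Y ^ 2 + d ^ 2 ≤ c ^ 2) : X * Y + b * d ≤ a * c := by
  refine le_of_abs_le (abs_le_of_sq_le_sq ?_ (mul_nonneg ha hc))
  nlinarith [sq_nonneg (X * d - b * Y), mul_le_mul hXb hYd (by positivity) (sq_nonneg a)]

theorem Orthonormal.abs_inner_sub_sum_inner_mul_inner_le (he : Orthonormal ℝ e) (s : Finset ι)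
    {x y : E} {m M n N : ι → ℝ}
    (hx : 0 ≤ ⟪∑ i ∈ s, M i • e i - x, x - ∑ i ∈ s, m i • e i⟫)
    (hy : 0 ≤ ⟪∑ i ∈ s, N i • e i - y, y - ∑ i ∈ s, n i • e i⟫) :
    |⟪x, y⟫ - ∑ i ∈ s, ⟪x, e i⟫ * ⟪y, e i⟫| ≤
      1 / 4 * √(∑ i ∈ s, (M i - m i) ^ 2) * √(∑ i ∈ s, (N i - n i) ^ 2) -
        ∑ i ∈ s, |(M i + m i) / 2 - ⟪x, e i⟫| * |(N i + n i) / 2 - ⟪y, e i⟫| := by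
  set p := fun i => (M i + m i) / 2 - ⟪x, e i⟫
  set q := fun i => (N i + n i) / 2 - ⟪y, e i⟫
  have hsq {S : ℝ} (hS : 0 ≤ S) : (√S / 2) ^ 2 = S / 4 := by
    rw [div_pow, Real.sq_sqrt hS]; norm_num
  have hnorm {z : E} {S C : ℝ} (hS : 0 ≤ S) (hC : 0 ≤ C) (hz : ‖z‖ ^ 2 ≤ S / 4 - C) :
      ‖z‖ ^ 2 + √C ^ 2 ≤ (√S / 2) ^ 2 := by
    rw [hsq hS, Real.sq_sqrt hC]; linarith
  have hpq : ∑ i ∈ s, |p i| * |q i| ≤ √(∑ i ∈ s, p i ^ 2) * √(∑ i ∈ s, q i ^ 2) := by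
    simpa only [sq_abs] using Real.sum_mul_le_sqrt_mul_sqrt s (fun i => |p i|) (fun i => |q i|)
  rw [← he.inner_sub_sum_inner_smul]
  calc _ ≤ ‖x - ∑ i ∈ s, ⟪x, e i⟫ • e i‖ * ‖y - ∑ i ∈ s, ⟪y, e i⟫ • e i‖ :=
        abs_real_inner_le_norm _ _
    _ ≤ √(∑ i ∈ s, (M i - m i) ^ 2) / 2 * (√(∑ i ∈ s, (N i - n i) ^ 2) / 2) -
          √(∑ i ∈ s, p i ^ 2) * √(∑ i ∈ s, q i ^ 2) := by
      refine le_sub_right_of_add_le (mul_add_mul_le_mul_of_sq_add_sq_le (by positivity)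
        (by positivity) ?_ ?_)
      · exact hnorm (by positivity) (by positivity) (he.norm_sub_sum_inner_smul_sq_le s x m M hx)
      · exact hnorm (by positivity) (by positivity) (he.norm_sub_sum_inner_smul_sq_le s y n N hy)
    _ ≤ _ := by linarith

end Orthonormal

section L2

variable {ι : Type*}

theorem MeasureTheory.Lp.coeFn_sum {E : Type*} [NormedAddCommGroup E] {p : ENNReal}
    {μ : Measure Ω} (s : Finset ι) (u : ι → Lp E p μ) :
    ⇑(∑ i ∈ s, u i) =ᵐ[μ] fun a => ∑ i ∈ s, u i a := by
  classical
  induction s using Finset.induction_on with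
  | empty => exact Lp.coeFn_zero E p μ
  | insert j s hj ih =>
    rw [sum_insert hj]
    filter_upwards [Lp.coeFn_add (u j) (∑ i ∈ s, u i), ih] with a hadd hsum
    rw [hadd, Pi.add_apply, hsum, sum_insert hj]

theorem MeasureTheory.L2.inner_toLp_toLp {ν : Measure Ω} {f g : Ω → ℝ} (hf : MemLp f 2 ν)
    (hg : MemLp g 2 ν) : ⟪hf.toLp f, hg.toLp g⟫ = ∫ a, f a * g a ∂ν := by
  rw [L2.inner_def]
  refine integral_congr_ae ?_
  filter_upwards [hf.coeFn_toLp, hg.coeFn_toLp] with a hfa hga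
  simp [hfa, hga, mul_comm]

theorem MeasureTheory.Lp.coeFn_sum_smul_toLp {ν : Measure Ω} {u : ι → Ω → ℝ}
    (hu : ∀ i, MemLp (u i) 2 ν) (s : Finset ι) (k : ι → ℝ) :
    ⇑(∑ i ∈ s, k i • (hu i).toLp (u i)) =ᵐ[ν] fun a => ∑ i ∈ s, k i * u i a := by
  filter_upwards [Lp.coeFn_sum s fun i => k i • (hu i).toLp (u i),
    (Filter.eventually_all_finset s).2 fun i _ => Lp.coeFn_smul (k i) ((hu i).toLp (u i)),
    (Filter.eventually_all_finset s).2 fun i _ => (hu i).coeFn_toLp] with a hsum hsmul hua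
  rw [hsum]
  exact sum_congr rfl fun i hi => by rw [hsmul i hi, Pi.smul_apply, hua i hi, smul_eq_mul]

theorem MeasureTheory.L2.inner_sum_smul_toLp_sub_nonneg {ν : Measure Ω} {u : ι → Ω → ℝ}
    (hu : ∀ i, MemLp (u i) 2 ν) {f : Ω → ℝ} (hf : MemLp f 2 ν) (s : Finset ι) {c d : ι → ℝ}
    (hbound : ∀ᵐ a ∂ν, ∑ i ∈ s, c i * u i a ≤ f a ∧ f a ≤ ∑ i ∈ s, d i * u i a) :
    0 ≤ ⟪∑ i ∈ s, d i • (hu i).toLp (u i) - hf.toLp f,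
        hf.toLp f - ∑ i ∈ s, c i • (hu i).toLp (u i)⟫ := by
  rw [L2.inner_def]
  refine integral_nonneg_of_ae ?_
  filter_upwards [Lp.coeFn_sub (∑ i ∈ s, d i • (hu i).toLp (u i)) (hf.toLp f),
    Lp.coeFn_sub (hf.toLp f) (∑ i ∈ s, c i • (hu i).toLp (u i)),
    Lp.coeFn_sum_smul_toLp hu s c, Lp.coeFn_sum_smul_toLp hu s d, hf.coeFn_toLp, hbound]
    with a hsub₁ hsub₂ hc hd hfa ha
  rw [hsub₁, hsub₂, Pi.sub_apply, Pi.sub_apply, hc, hd, hfa, real_inner_eq_re_inner,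
    RCLike.inner_apply, conj_trivial]
  exact mul_nonneg (sub_nonneg.2 ha.1) (sub_nonneg.2 ha.2)

end L2

section WeightedL2

variable {μ : Measure Ω} {ρ : Ω → ℝ}

theorem integral_withDensity_ofReal (hρ : ∀ s, 0 ≤ ρ s) (hρm : Measurable ρ) (g : Ω → ℝ) :
    ∫ s, g s ∂μ.withDensity (fun s => ENNReal.ofReal (ρ s)) = ∫ s, ρ s * g s ∂μ := by
  rw [integral_withDensity_eq_integral_toReal_smul hρm.ennreal_ofReal
    (Filter.Eventually.of_forall fun _ => ENNReal.ofReal_lt_top)]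
  simp only [ENNReal.toReal_ofReal (hρ _), smul_eq_mul]

theorem memLp_two_withDensity_ofReal (hρ : ∀ s, 0 ≤ ρ s) (hρm : Measurable ρ) {f : Ω → ℝ}
    (hfm : AEStronglyMeasurable f μ) (hf2 : Integrable (fun s => ρ s * f s ^ 2) μ) :
    MemLp f 2 (μ.withDensity fun s => ENNReal.ofReal (ρ s)) := by
  refine (memLp_two_iff_integrable_sq (hfm.mono_ac (withDensity_absolutelyContinuous _ _))).2 ?_
  rw [integrable_withDensity_iff_integrable_smul' hρm.ennreal_ofReal
    (Filter.Eventually.of_forall fun _ => ENNReal.ofReal_lt_top)]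
  simpa only [ENNReal.toReal_ofReal (hρ _), smul_eq_mul] using hf2

theorem inner_toLp_withDensity_ofReal (hρ : ∀ s, 0 ≤ ρ s) (hρm : Measurable ρ) {f g : Ω → ℝ}
    (hf : MemLp f 2 (μ.withDensity fun s => ENNReal.ofReal (ρ s)))
    (hg : MemLp g 2 (μ.withDensity fun s => ENNReal.ofReal (ρ s))) :
    ⟪hf.toLp f, hg.toLp g⟫ = ∫ s, ρ s * (f s * g s) ∂μ := by
  rw [L2.inner_toLp_toLp, integral_withDensity_ofReal hρ hρm]

end WeightedL2

theorem stmt18 (μ : Measure Ω) (ρ : Ω → ℝ) (hρ : ∀ s, 0 ≤ ρ s) (hρm : Measurable ρ)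
    (fi : I → Ω → ℝ) (hfim : ∀ i, AEStronglyMeasurable (fi i) μ)
    (hfi2 : ∀ i, Integrable (fun s => ρ s * fi i s ^ 2) μ)
    (horth : ∀ i j, ∫ s, ρ s * (fi i s * fi j s) ∂μ = if i = j then 1 else 0)
    (F : Finset I) (m M n N : I → ℝ)
    (f g : Ω → ℝ) (hfm : AEStronglyMeasurable f μ) (hgm : AEStronglyMeasurable g μ)
    (hf2 : Integrable (fun s => ρ s * f s ^ 2) μ)
    (hg2 : Integrable (fun s => ρ s * g s ^ 2) μ)
    (hfbound : ∀ᵐ s ∂μ, (∑ i ∈ F, m i * fi i s) ≤ f s ∧ f s ≤ ∑ i ∈ F, M i * fi i s)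
    (hgbound : ∀ᵐ s ∂μ, (∑ i ∈ F, n i * fi i s) ≤ g s ∧ g s ≤ ∑ i ∈ F, N i * fi i s) :
    |(∫ s, ρ s * (f s * g s) ∂μ) -
        ∑ i ∈ F, (∫ s, ρ s * (f s * fi i s) ∂μ) * (∫ s, ρ s * (g s * fi i s) ∂μ)| ≤
      (1 / 4) * Real.sqrt (∑ i ∈ F, (M i - m i) ^ 2) *
          Real.sqrt (∑ i ∈ F, (N i - n i) ^ 2) -
        ∑ i ∈ F, |(M i + m i) / 2 - ∫ s, ρ s * (f s * fi i s) ∂μ| *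
          |(N i + n i) / 2 - ∫ s, ρ s * (g s * fi i s) ∂μ| ∧
    (1 / 4) * Real.sqrt (∑ i ∈ F, (M i - m i) ^ 2) *
          Real.sqrt (∑ i ∈ F, (N i - n i) ^ 2) -
        ∑ i ∈ F, |(M i + m i) / 2 - ∫ s, ρ s * (f s * fi i s) ∂μ| *
          |(N i + n i) / 2 - ∫ s, ρ s * (g s * fi i s) ∂μ| ≤
      (1 / 4) * Real.sqrt (∑ i ∈ F, (M i - m i) ^ 2) *
          Real.sqrt (∑ i ∈ F, (N i - n i) ^ 2) := by
  have hL {u : Ω → ℝ} := memLp_two_withDensity_ofReal (μ := μ) (f := u) hρ hρm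
  have hac := withDensity_absolutelyContinuous μ fun s => ENNReal.ofReal (ρ s)
  have he : Orthonormal ℝ fun i => (hL (hfim i) (hfi2 i)).toLp (fi i) :=
    orthonormal_iff_ite.2 fun i j => (inner_toLp_withDensity_ofReal hρ hρm _ _).trans (horth i j)
  have key := he.abs_inner_sub_sum_inner_mul_inner_le F
    (L2.inner_sum_smul_toLp_sub_nonneg _ (hL hfm hf2) F (hac.ae_le hfbound))
    (L2.inner_sum_smul_toLp_sub_nonneg _ (hL hgm hg2) F (hac.ae_le hgbound))
  simp only [inner_toLp_withDensity_ofReal hρ hρm] at key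
  exact ⟨key, sub_le_self _ (sum_nonneg fun _ _ => by positivity)⟩
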